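/- Let c ∈ (−√2, √2) and β = √(2 − c²). For every κ with 0 < κ < 2β there exists a constant C > 0, depending only on c and κ, such that for every continuously differentiable f : ℝ → ℝ with f and f' bounded and ∫_ℝ f·Q_c = 0, the function g(x) = (1/Q_c(x))·∫_x^∞ f(y)·Q_c(y) dy satisfies ‖ρ^κ·g‖_{L²} + ‖ρ^κ·g'‖_{L²} ≤ C·‖ρ^{κ/2}·f‖_{L²}, where ρ(x) = sech(x). -/

import Mathlib

/-!
With `F(x) = ∫ₓ^∞ f Q_c`, the solution is `g = F / Q_c`, and the mean-zero condition also gives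
`F(x) = -∫_{-∞}^x f Q_c`; so `F(x)` is always an integral over a half-line pointing away from the
origin. On it, Cauchy–Schwarz against `ρ^{κ/2} f`, with `ρ^{-κ/2} Q_c ≲ e^{-(β - κ/2)|y|}`, gives
`|F(x)| ≲ ‖ρ^{κ/2} f‖₂ e^{-(β - κ/2)|x|}`, and `κ < 2β` is exactly what makes this decay. Since
`Q_c⁻¹ ≲ e^{β|x|}` and `ρ^κ ≲ e^{-κ|x|}`, this is the pointwise bound
`ρ^κ |g| ≲ ‖ρ^{κ/2} f‖₂ e^{-κ|x|/2}`, which is square integrable. The equation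
`g' = √2 R_c g - f`, with `|√2 R_c| ≤ β` and `ρ^κ ≤ ρ^{κ/2}`, transfers the bound to `g'`.
-/

open Real MeasureTheory Set Filter

/-- The real part of the traveling-wave profile. -/
noncomputable def Rc (c x : ℝ) : ℝ :=
  Real.sqrt ((2 - c ^ 2) / 2) * Real.tanh (Real.sqrt (2 - c ^ 2) * x / 2)

/-- The soliton profile `Q_c(x) = (β²/2) sech²(βx/2)` with `β = √(2 - c²)`. -/
noncomputable def Q (c x : ℝ) : ℝ :=
  (Real.sqrt (2 - c ^ 2)) ^ 2 / 2
    * ((Real.cosh (Real.sqrt (2 - c ^ 2) * x / 2))⁻¹) ^ 2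

/-- The weight `ρ(x) = sech x`. -/
noncomputable def rho (x : ℝ) : ℝ := (Real.cosh x)⁻¹

namespace Real

theorem cosh_le_exp_abs (x : ℝ) : cosh x ≤ exp |x| := by
  rw [cosh_eq]
  linarith [exp_le_exp.2 (le_abs_self x), exp_le_exp.2 (neg_le_abs x)]

theorem exp_neg_abs_le_inv_cosh (x : ℝ) : exp (-|x|) ≤ (cosh x)⁻¹ := by
  rw [exp_neg]
  exact inv_anti₀ (cosh_pos x) (cosh_le_exp_abs x)

theorem inv_cosh_le_two_mul_exp_neg_abs (x : ℝ) : (cosh x)⁻¹ ≤ 2 * exp (-|x|) := by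
  rw [exp_neg, ← div_eq_mul_inv, le_div_iff₀ (exp_pos _), inv_mul_le_iff₀ (cosh_pos x), cosh_eq]
  linarith [exp_abs_le x]

end Real

theorem exp_sq_eq_exp_two_mul (t : ℝ) : exp t ^ 2 = exp (2 * t) := by
  rw [sq, ← exp_add, two_mul]

theorem setIntegral_Ioi_exp_neg_mul_abs {a x : ℝ} (ha : 0 < a) (hx : 0 ≤ x) :
    ∫ y in Ioi x, exp (-a * |y|) = exp (-a * |x|) / a := by
  rw [setIntegral_congr_fun measurableSet_Ioi (g := fun y => exp (-a * y))
    fun y hy => by rw [abs_of_pos (hx.trans_lt hy)], integral_exp_mul_Ioi (neg_neg_of_pos ha),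
    abs_of_nonneg hx, div_neg, neg_div, neg_neg]

theorem setIntegral_Iic_exp_neg_mul_abs {a x : ℝ} (ha : 0 < a) (hx : x ≤ 0) :
    ∫ y in Iic x, exp (-a * |y|) = exp (-a * |x|) / a := by
  rw [setIntegral_congr_fun measurableSet_Iic (g := fun y => exp (a * y))
    fun y hy => by rw [abs_of_nonpos (hy.trans hx), neg_mul_neg], integral_exp_mul_Iic ha,
    abs_of_nonpos hx, neg_mul_neg]

theorem integral_exp_neg_mul_abs {a : ℝ} (ha : 0 < a) : ∫ x, exp (-a * |x|) = 2 / a := by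
  rw [integral_comp_abs (f := fun y => exp (-a * y)), integral_exp_mul_Ioi (neg_neg_of_pos ha)]
  field_simp
  simp

theorem integrable_exp_neg_mul_abs {a : ℝ} (ha : 0 < a) :
    Integrable fun x => exp (-a * |x|) :=
  .of_integral_ne_zero (by rw [integral_exp_neg_mul_abs ha]; positivity)

theorem memLp_exp_neg_mul_abs {a : ℝ} (ha : 0 < a) : MemLp (fun x => exp (-a * |x|)) 2 := by
  refine (memLp_two_iff_integrable_sq (by fun_prop)).2 ?_
  simpa only [exp_sq_eq_exp_two_mul, ← mul_assoc, mul_neg, neg_mul] using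
    integrable_exp_neg_mul_abs (mul_pos two_pos ha)

theorem sqrt_integral_sq_le_of_abs_le_mul_exp {u : ℝ → ℝ} {K a : ℝ} (ha : 0 < a)
    (h : ∀ x, |u x| ≤ K * exp (-a * |x|)) : √(∫ x, u x ^ 2) ≤ K / √a := by
  have hK : 0 ≤ K := nonneg_of_mul_nonneg_left ((abs_nonneg _).trans (h 0)) (exp_pos _)
  have hsq : ∀ x, u x ^ 2 ≤ K ^ 2 * exp (-(2 * a) * |x|) := fun x => by
    calc u x ^ 2 = |u x| ^ 2 := (sq_abs _).symm
      _ ≤ (K * exp (-a * |x|)) ^ 2 := pow_le_pow_left₀ (abs_nonneg _) (h x) 2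
      _ = _ := by rw [mul_pow, exp_sq_eq_exp_two_mul]; ring_nf
  calc √(∫ x, u x ^ 2) ≤ √(∫ x, K ^ 2 * exp (-(2 * a) * |x|)) :=
        sqrt_le_sqrt <| integral_mono_of_nonneg (.of_forall fun x => sq_nonneg _)
          ((integrable_exp_neg_mul_abs (by positivity)).const_mul _) (.of_forall hsq)
    _ = K / √a := by
        rw [integral_const_mul, integral_exp_neg_mul_abs (by positivity), sqrt_mul (sq_nonneg _),
          sqrt_sq hK, div_mul_cancel_left₀ two_ne_zero, ← one_div, sqrt_div' _ ha.le, sqrt_one,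
          mul_one_div]

section L2

variable {α : Type*} [MeasurableSpace α] {μ : Measure α}

theorem abs_integral_le_of_abs_le_mul {φ u v : α → ℝ} (hu : MemLp u 2 μ) (hv : MemLp v 2 μ)
    (h : ∀ᵐ y ∂μ, |φ y| ≤ |u y| * |v y|) :
    |∫ y, φ y ∂μ| ≤ √(∫ y, u y ^ 2 ∂μ) * √(∫ y, v y ^ 2 ∂μ) := by
  have hsq : ∀ w : α → ℝ, (fun y => ‖w y‖ ^ (2 : ℝ)) = fun y => w y ^ 2 := fun w => by
    ext y; rw [rpow_two, norm_eq_abs, sq_abs]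
  have hCS := integral_mul_norm_le_Lp_mul_Lq (μ := μ) HolderConjugate.two_two
    (by simpa using hu) (by simpa using hv)
  rw [hsq, hsq, ← sqrt_eq_rpow, ← sqrt_eq_rpow] at hCS
  refine abs_integral_le_integral_abs.trans <| (integral_mono_of_nonneg
    (.of_forall fun y => abs_nonneg _) (hu.norm.integrable_mul hv.norm) ?_).trans hCS
  filter_upwards [h] with y hy
  simpa only [norm_eq_abs, Pi.mul_apply] using hy

theorem sqrt_integral_sq_le_of_abs_le_add {u p q : α → ℝ} (hp : MemLp p 2 μ) (hq : MemLp q 2 μ)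
    (h : ∀ᵐ x ∂μ, |u x| ≤ |p x| + |q x|) :
    √(∫ x, u x ^ 2 ∂μ) ≤ √(∫ x, p x ^ 2 ∂μ) + √(∫ x, q x ^ 2 ∂μ) := by
  have hpq : |∫ x, |p x| * |q x| ∂μ| ≤ √(∫ x, p x ^ 2 ∂μ) * √(∫ x, q x ^ 2 ∂μ) :=
    abs_integral_le_of_abs_le_mul hp hq (.of_forall fun x => by rw [abs_mul, abs_abs, abs_abs])
  have hexpand : ∫ x, (|p x| + |q x|) ^ 2 ∂μ
      = ∫ x, p x ^ 2 ∂μ + 2 * ∫ x, |p x| * |q x| ∂μ + ∫ x, q x ^ 2 ∂μ := by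
    have hpq' : Integrable (fun x => |p x| * |q x|) μ := hp.abs.integrable_mul hq.abs
    have hsum : Integrable (fun x => p x ^ 2 + 2 * (|p x| * |q x|)) μ :=
      hp.integrable_sq.add (hpq'.const_mul 2)
    simp_rw [add_sq, sq_abs, mul_assoc]
    rw [integral_add hsum hq.integrable_sq, integral_add hp.integrable_sq (hpq'.const_mul 2),
      integral_const_mul]
  refine (sqrt_le_sqrt ?_).trans_eq (sqrt_sq (by positivity))
  calc ∫ x, u x ^ 2 ∂μ ≤ ∫ x, (|p x| + |q x|) ^ 2 ∂μ := by
        refine integral_mono_of_nonneg (.of_forall fun x => sq_nonneg _)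
          (hp.abs.add hq.abs).integrable_sq ?_
        filter_upwards [h] with x hx
        rw [← sq_abs (u x)]
        exact pow_le_pow_left₀ (abs_nonneg _) hx 2
    _ ≤ _ := by
        rw [hexpand, add_sq, sq_sqrt (integral_nonneg fun x => sq_nonneg _),
          sq_sqrt (integral_nonneg fun x => sq_nonneg _)]
        linarith [le_abs_self (∫ x, |p x| * |q x| ∂μ)]

end L2

theorem hasDerivAt_setIntegral_Ioi {φ : ℝ → ℝ} (hφ : Integrable φ) (hcont : Continuous φ)
    (x : ℝ) : HasDerivAt (fun z => ∫ y in Ioi z, φ y) (-φ x) x := by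
  refine ((intervalIntegral.integral_hasDerivAt_right (hcont.intervalIntegrable 0 x)
    (hcont.stronglyMeasurableAtFilter _ _) hcont.continuousAt).const_sub
    (∫ y in Ioi 0, φ y)).congr_of_eventuallyEq (.of_forall fun z => ?_)
  show ∫ y in Ioi z, φ y = (∫ y in Ioi 0, φ y) - ∫ y in (0 : ℝ)..z, φ y
  rw [← intervalIntegral.integral_Ioi_sub_Ioi' hφ.integrableOn hφ.integrableOn, sub_sub_cancel]

theorem rho_pos (x : ℝ) : 0 < rho x := inv_pos.2 (cosh_pos x)

theorem continuous_rho : Continuous rho := continuous_cosh.inv₀ fun x => (cosh_pos x).ne'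

theorem rho_rpow_le {s : ℝ} (hs : 0 ≤ s) (x : ℝ) : rho x ^ s ≤ 2 ^ s * exp (-s * |x|) :=
  calc rho x ^ s ≤ (2 * exp (-|x|)) ^ s :=
        rpow_le_rpow (rho_pos x).le (inv_cosh_le_two_mul_exp_neg_abs x) hs
    _ = 2 ^ s * exp (-s * |x|) := by
        rw [mul_rpow zero_le_two (exp_pos _).le, ← exp_mul]
        congr 2; ring

theorem rho_rpow_neg_le {s : ℝ} (hs : 0 ≤ s) (x : ℝ) : rho x ^ (-s) ≤ exp (s * |x|) :=
  calc rho x ^ (-s) ≤ exp (-|x|) ^ (-s) :=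
        rpow_le_rpow_of_nonpos (exp_pos _) (exp_neg_abs_le_inv_cosh x) (neg_nonpos.2 hs)
    _ = exp (s * |x|) := by rw [← exp_mul, neg_mul_neg, mul_comm]

theorem rho_rpow_le_rho_rpow {s t : ℝ} (hst : s ≤ t) (x : ℝ) : rho x ^ t ≤ rho x ^ s :=
  rpow_le_rpow_of_exponent_ge (rho_pos x) (inv_le_one_of_one_le₀ (one_le_cosh x)) hst

theorem memLp_rho_rpow_mul {f : ℝ → ℝ} {s M : ℝ} (hs : 0 < s) (hf : Continuous f)
    (hM : ∀ x, |f x| ≤ M) : MemLp (fun x => rho x ^ s * f x) 2 := by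
  refine ((memLp_exp_neg_mul_abs hs).const_mul (2 ^ s * M)).of_le
    ((continuous_rho.rpow_const fun x => .inl (rho_pos x).ne').mul hf).aestronglyMeasurable
    (.of_forall fun x => ?_)
  simp only [norm_eq_abs]
  refine le_trans ?_ (le_abs_self _)
  rw [abs_mul, abs_of_pos (rpow_pos_of_pos (rho_pos x) s), mul_right_comm]
  exact mul_le_mul (rho_rpow_le hs.le x) (hM x) (abs_nonneg _) (by positivity)

section Soliton

variable {c : ℝ}

local notation "β" => √(2 - c ^ 2)

theorem Q_nonneg (x : ℝ) : 0 ≤ Q c x := by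
  unfold Q; positivity

theorem Q_pos (hc : c ^ 2 < 2) (x : ℝ) : 0 < Q c x := by
  have : 0 < β := sqrt_pos.2 (by linarith)
  have := cosh_pos (β * x / 2)
  unfold Q; positivity

theorem continuous_Q : Continuous (Q c) := by
  unfold Q
  exact continuous_const.mul
    (((continuous_cosh.comp (by fun_prop)).inv₀ fun x => (cosh_pos _).ne').pow 2)

theorem abs_sqrt_mul_div_two (x : ℝ) : |β * x / 2| = β * |x| / 2 := by
  rw [abs_div, abs_mul, abs_of_nonneg (sqrt_nonneg _), abs_two]

theorem Q_le (x : ℝ) : Q c x ≤ 2 * β ^ 2 * exp (-β * |x|) := by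
  have h := pow_le_pow_left₀ (inv_nonneg.2 (cosh_pos _).le)
    (inv_cosh_le_two_mul_exp_neg_abs (β * x / 2)) 2
  rw [mul_pow, exp_sq_eq_exp_two_mul, abs_sqrt_mul_div_two] at h
  unfold Q
  calc β ^ 2 / 2 * ((cosh (β * x / 2))⁻¹) ^ 2 ≤ β ^ 2 / 2 * (2 ^ 2 * exp (2 * -(β * |x| / 2))) :=
        mul_le_mul_of_nonneg_left h (by positivity)
    _ = 2 * β ^ 2 * exp (-β * |x|) := by ring_nf

theorem le_Q (x : ℝ) : β ^ 2 / 2 * exp (-β * |x|) ≤ Q c x := by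
  have h := pow_le_pow_left₀ (exp_pos _).le (exp_neg_abs_le_inv_cosh (β * x / 2)) 2
  rw [exp_sq_eq_exp_two_mul, abs_sqrt_mul_div_two, show 2 * -(β * |x| / 2) = -β * |x| by ring] at h
  exact mul_le_mul_of_nonneg_left h (by positivity)

theorem inv_Q_le (hc : c ^ 2 < 2) (x : ℝ) : (Q c x)⁻¹ ≤ 2 / β ^ 2 * exp (β * |x|) := by
  have : 0 < β := sqrt_pos.2 (by linarith)
  refine (inv_anti₀ (by positivity) (le_Q x)).trans_eq ?_
  rw [mul_inv, ← exp_neg, neg_mul, neg_neg, inv_div]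

theorem sqrt_two_mul_Rc (x : ℝ) : √2 * Rc c x = β * tanh (β * x / 2) := by
  rw [Rc, ← mul_assoc, ← sqrt_mul zero_le_two, mul_div_cancel₀ _ two_ne_zero]

theorem abs_sqrt_two_mul_Rc_le (x : ℝ) : |√2 * Rc c x| ≤ β := by
  rw [sqrt_two_mul_Rc, abs_mul, abs_of_nonneg (sqrt_nonneg _)]
  exact mul_le_of_le_one_right (sqrt_nonneg _) (abs_tanh_lt_one _).le

theorem hasDerivAt_Q (x : ℝ) : HasDerivAt (Q c) (-(√2 * Rc c x * Q c x)) x := by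
  have hu : HasDerivAt (fun z => β * z / 2) (β / 2) x := by
    simpa using ((hasDerivAt_id x).const_mul β).div_const 2
  have hsech : HasDerivAt (fun z => (cosh (β * z / 2))⁻¹)
      (-(sinh (β * x / 2) * (β / 2)) / cosh (β * x / 2) ^ 2) x :=
    ((hasDerivAt_cosh _).comp x hu).inv (cosh_pos _).ne'
  refine ((hsech.pow 2).const_mul (β ^ 2 / 2)).congr_deriv ?_
  rw [sqrt_two_mul_Rc, Q, tanh_eq_sinh_div_cosh]
  have := (cosh_pos (β * x / 2)).ne'
  generalize β * x / 2 = u at this ⊢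
  norm_num
  field_simp

theorem abs_mul_Q_le (f : ℝ → ℝ) {κ : ℝ} (hκ : 0 ≤ κ) (y : ℝ) :
    |f y * Q c y| ≤ |rho y ^ (κ / 2) * f y| * |2 * β ^ 2 * exp (-(β - κ / 2) * |y|)| := by
  have hρ : rho y ^ (κ / 2) * rho y ^ (-(κ / 2)) = 1 := by
    rw [rpow_neg (rho_pos y).le, mul_inv_cancel₀ (rpow_pos_of_pos (rho_pos y) _).ne']
  rw [abs_mul, abs_mul, abs_of_nonneg (Q_nonneg y), abs_of_pos (rpow_pos_of_pos (rho_pos y) _),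
    abs_of_nonneg (by positivity : 0 ≤ 2 * β ^ 2 * exp (-(β - κ / 2) * |y|))]
  calc |f y| * Q c y = rho y ^ (κ / 2) * |f y| * (rho y ^ (-(κ / 2)) * Q c y) := by
        rw [mul_mul_mul_comm, hρ, one_mul]
    _ ≤ rho y ^ (κ / 2) * |f y| * (exp (κ / 2 * |y|) * (2 * β ^ 2 * exp (-β * |y|))) := by
        refine mul_le_mul_of_nonneg_left ?_
          (mul_nonneg (rpow_pos_of_pos (rho_pos y) _).le (abs_nonneg _))
        exact mul_le_mul (rho_rpow_neg_le (by positivity) y) (Q_le y) (Q_nonneg y) (exp_pos _).le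
    _ = rho y ^ (κ / 2) * |f y| * (2 * β ^ 2 * exp (-(β - κ / 2) * |y|)) := by
        rw [show -(β - κ / 2) * |y| = κ / 2 * |y| + -β * |y| by ring, exp_add]
        ring

theorem integrable_mul_Q {f : ℝ → ℝ} {κ : ℝ} (hκ : 0 ≤ κ) (hb : 0 < β - κ / 2)
    (hf : Continuous f) (hu : MemLp (fun y => rho y ^ (κ / 2) * f y) 2) :
    Integrable fun y => f y * Q c y :=
  (hu.integrable_mul ((memLp_exp_neg_mul_abs hb).const_mul (2 * β ^ 2))).norm.mono'
    (hf.mul continuous_Q).aestronglyMeasurable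
    (.of_forall fun y => (abs_mul_Q_le f hκ y).trans_eq (abs_mul _ _).symm)

theorem abs_setIntegral_mul_Q_le {f : ℝ → ℝ} {κ : ℝ} (hκ : 0 ≤ κ) (hb : 0 < β - κ / 2)
    (hu : MemLp (fun y => rho y ^ (κ / 2) * f y) 2) (s : Set ℝ) :
    |∫ y in s, f y * Q c y| ≤ √(∫ y, (rho y ^ (κ / 2) * f y) ^ 2)
      * (2 * β ^ 2 * √(∫ y in s, exp (-(2 * (β - κ / 2)) * |y|))) := by
  refine (abs_integral_le_of_abs_le_mul (hu.restrict s)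
    (((memLp_exp_neg_mul_abs hb).const_mul (2 * β ^ 2)).restrict s)
    (.of_forall (abs_mul_Q_le f hκ))).trans ?_
  have hv : ∫ y in s, (2 * β ^ 2 * exp (-(β - κ / 2) * |y|)) ^ 2
      = (2 * β ^ 2) ^ 2 * ∫ y in s, exp (-(2 * (β - κ / 2)) * |y|) := by
    rw [← integral_const_mul]
    congr 1 with y
    rw [mul_pow, exp_sq_eq_exp_two_mul]
    ring_nf
  rw [hv, sqrt_mul (sq_nonneg _), sqrt_sq (by positivity)]
  exact mul_le_mul_of_nonneg_right (sqrt_le_sqrt (setIntegral_le_integral hu.integrable_sq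
    (.of_forall fun y => sq_nonneg _))) (by positivity)

noncomputable def sstInv (c : ℝ) (f : ℝ → ℝ) (x : ℝ) : ℝ :=
  (Q c x)⁻¹ * ∫ y in Ioi x, f y * Q c y

theorem hasDerivAt_sstInv {f : ℝ → ℝ} (hc : c ^ 2 < 2) (hf : Continuous f)
    (hfQ : Integrable fun y => f y * Q c y) (x : ℝ) :
    HasDerivAt (sstInv c f) (√2 * Rc c x * sstInv c f x - f x) x := by
  refine (((hasDerivAt_Q x).inv (Q_pos hc x).ne').mul
    (hasDerivAt_setIntegral_Ioi hfQ (hf.mul continuous_Q) x)).congr_deriv ?_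
  have := (Q_pos hc x).ne'
  simp only [sstInv, Pi.inv_apply]
  field_simp
  ring

theorem abs_setIntegral_Ioi_mul_Q_le {f : ℝ → ℝ} {κ : ℝ} (hκ : 0 ≤ κ) (hb : 0 < β - κ / 2)
    (hu : MemLp (fun y => rho y ^ (κ / 2) * f y) 2) (hfQ : Integrable fun y => f y * Q c y)
    (hmean : ∫ y, f y * Q c y = 0) (x : ℝ) :
    |∫ y in Ioi x, f y * Q c y| ≤ √(∫ y, (rho y ^ (κ / 2) * f y) ^ 2)
      * (2 * β ^ 2 * (exp (-(β - κ / 2) * |x|) / √(2 * (β - κ / 2)))) := by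
  set b := β - κ / 2
  have hsqrt : √(exp (-(2 * b) * |x|) / (2 * b)) = exp (-b * |x|) / √(2 * b) := by
    rw [sqrt_div' _ (by positivity), ← sqrt_sq (exp_pos (-b * |x|)).le, exp_sq_eq_exp_two_mul]
    ring_nf
  rcases le_total 0 x with hx | hx
  · refine (abs_setIntegral_mul_Q_le hκ hb hu (Ioi x)).trans_eq ?_
    rw [setIntegral_Ioi_exp_neg_mul_abs (by positivity) hx, hsqrt]
  · have hIic : ∫ y in Ioi x, f y * Q c y = -∫ y in Iic x, f y * Q c y :=
      eq_neg_of_add_eq_zero_right <|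
        (intervalIntegral.integral_Iic_add_Ioi hfQ.integrableOn hfQ.integrableOn).trans hmean
    rw [hIic, abs_neg]
    refine (abs_setIntegral_mul_Q_le hκ hb hu (Iic x)).trans_eq ?_
    rw [setIntegral_Iic_exp_neg_mul_abs (by positivity) hx, hsqrt]

theorem abs_rho_rpow_mul_sstInv_le {f : ℝ → ℝ} {κ : ℝ} (hc : c ^ 2 < 2) (hκ : 0 ≤ κ)
    (hb : 0 < β - κ / 2) (hu : MemLp (fun y => rho y ^ (κ / 2) * f y) 2)
    (hfQ : Integrable fun y => f y * Q c y) (hmean : ∫ y, f y * Q c y = 0) (x : ℝ) :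
    |rho x ^ κ * sstInv c f x| ≤ 2 ^ κ * 4 / √(2 * (β - κ / 2))
      * √(∫ y, (rho y ^ (κ / 2) * f y) ^ 2) * exp (-(κ / 2) * |x|) := by
  have hβ : 0 < β := by linarith
  have hexp : exp (-κ * |x|) * exp (β * |x|) * exp (-(β - κ / 2) * |x|)
      = exp (-(κ / 2) * |x|) := by
    rw [← exp_add, ← exp_add]
    ring_nf
  calc |rho x ^ κ * sstInv c f x|
      = rho x ^ κ * (Q c x)⁻¹ * |∫ y in Ioi x, f y * Q c y| := by
        rw [sstInv, abs_mul, abs_mul, abs_of_pos (rpow_pos_of_pos (rho_pos x) κ),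
          abs_of_pos (inv_pos.2 (Q_pos hc x)), mul_assoc]
    _ ≤ 2 ^ κ * exp (-κ * |x|) * (2 / β ^ 2 * exp (β * |x|))
          * (√(∫ y, (rho y ^ (κ / 2) * f y) ^ 2)
            * (2 * β ^ 2 * (exp (-(β - κ / 2) * |x|) / √(2 * (β - κ / 2))))) :=
        mul_le_mul (mul_le_mul (rho_rpow_le hκ x) (inv_Q_le hc x) (inv_nonneg.2 (Q_nonneg x))
          (by positivity)) (abs_setIntegral_Ioi_mul_Q_le hκ hb hu hfQ hmean x) (abs_nonneg _)
          (by positivity)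
    _ = _ := by
        rw [← hexp]
        field_simp
        ring

theorem abs_rho_rpow_mul_deriv_sstInv_le {f : ℝ → ℝ} {κ : ℝ} (hc : c ^ 2 < 2) (hκ : 0 ≤ κ)
    (hf : Continuous f) (hfQ : Integrable fun y => f y * Q c y) (x : ℝ) :
    |rho x ^ κ * deriv (sstInv c f) x|
      ≤ β * |rho x ^ κ * sstInv c f x| + |rho x ^ (κ / 2) * f x| := by
  have hρ : 0 < rho x ^ κ := rpow_pos_of_pos (rho_pos x) κ
  rw [(hasDerivAt_sstInv hc hf hfQ x).deriv, abs_mul, abs_mul, abs_mul, abs_of_pos hρ,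
    abs_of_pos (rpow_pos_of_pos (rho_pos x) _)]
  calc rho x ^ κ * |√2 * Rc c x * sstInv c f x - f x|
      ≤ rho x ^ κ * (|√2 * Rc c x| * |sstInv c f x| + |f x|) := by
        rw [← abs_mul]
        exact mul_le_mul_of_nonneg_left (abs_sub _ _) hρ.le
    _ ≤ rho x ^ κ * (β * |sstInv c f x|) + rho x ^ (κ / 2) * |f x| := by
        rw [mul_add]
        exact add_le_add (mul_le_mul_of_nonneg_left (mul_le_mul_of_nonneg_right
          (abs_sqrt_two_mul_Rc_le x) (abs_nonneg _)) hρ.le)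
          (mul_le_mul_of_nonneg_right (rho_rpow_le_rho_rpow (by linarith) x) (abs_nonneg _))
    _ = β * (rho x ^ κ * |sstInv c f x|) + rho x ^ (κ / 2) * |f x| := by ring

theorem sqrt_integral_sq_rho_rpow_mul_deriv_sstInv_le {f : ℝ → ℝ} {κ K : ℝ} (hc : c ^ 2 < 2)
    (hκ : 0 < κ) (hf : Continuous f) (hu : MemLp (fun y => rho y ^ (κ / 2) * f y) 2)
    (hfQ : Integrable fun y => f y * Q c y)
    (hg : ∀ x, |rho x ^ κ * sstInv c f x| ≤ K * exp (-(κ / 2) * |x|)) :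
    √(∫ x, (rho x ^ κ * deriv (sstInv c f) x) ^ 2)
      ≤ β * K / √(κ / 2) + √(∫ y, (rho y ^ (κ / 2) * f y) ^ 2) := by
  have hK : 0 ≤ K := nonneg_of_mul_nonneg_left ((abs_nonneg _).trans (hg 0)) (exp_pos _)
  have hp : ∀ x, |β * K * exp (-(κ / 2) * |x|)| = β * K * exp (-(κ / 2) * |x|) :=
    fun x => abs_of_nonneg (by positivity)
  refine (sqrt_integral_sq_le_of_abs_le_add
    ((memLp_exp_neg_mul_abs (half_pos hκ)).const_mul (β * K)) hu (.of_forall fun x => ?_)).trans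
    (add_le_add (sqrt_integral_sq_le_of_abs_le_mul_exp (half_pos hκ) fun x => (hp x).le) le_rfl)
  refine (abs_rho_rpow_mul_deriv_sstInv_le hc hκ.le hf hfQ x).trans (add_le_add ?_ le_rfl)
  rw [hp, mul_assoc]
  exact mul_le_mul_of_nonneg_left (hg x) (sqrt_nonneg _)

end Soliton

/-- Weighted `L²` bounds for the bounded solution `g` of `S_c* g = f`:
for `0 < κ < 2β`, `‖ρ^κ g‖ + ‖ρ^κ g'‖ ≲ ‖ρ^{κ/2} f‖`. -/
theorem Sst_inverse_weighted_bounds (c : ℝ)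
    (hc : c ∈ Set.Ioo (-Real.sqrt 2) (Real.sqrt 2)) (κ : ℝ)
    (hκ : 0 < κ) (hκ' : κ < 2 * Real.sqrt (2 - c ^ 2)) :
    ∃ C > 0, ∀ f : ℝ → ℝ, ContDiff ℝ 1 f →
      (∃ M, ∀ x, |f x| ≤ M) → (∃ M, ∀ x, |deriv f x| ≤ M) →
      (∫ y, f y * Q c y) = 0 →
      Real.sqrt (∫ x,
          (rho x ^ κ * ((Q c x)⁻¹ * ∫ y in Set.Ioi x, f y * Q c y)) ^ 2)
        + Real.sqrt (∫ x,
          (rho x ^ κ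
            * deriv (fun z => (Q c z)⁻¹ * ∫ y in Set.Ioi z, f y * Q c y) x) ^ 2)
      ≤ C * Real.sqrt (∫ x, (rho x ^ (κ / 2) * f x) ^ 2) := by
  have hc2 : c ^ 2 < 2 := by simpa using sq_lt_sq' hc.1 hc.2
  set β := √(2 - c ^ 2)
  have hb : 0 < β - κ / 2 := by linarith
  set A := 2 ^ κ * 4 / √(2 * (β - κ / 2))
  refine ⟨(1 + β) * A / √(κ / 2) + 1, by positivity, ?_⟩
  rintro f hf ⟨M, hM⟩ - hmean
  change √(∫ x, (rho x ^ κ * sstInv c f x) ^ 2) + √(∫ x, (rho x ^ κ * deriv (sstInv c f) x) ^ 2)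
    ≤ _
  set N := √(∫ x, (rho x ^ (κ / 2) * f x) ^ 2)
  have hu := memLp_rho_rpow_mul (half_pos hκ) hf.continuous hM
  have hfQ := integrable_mul_Q hκ.le hb hf.continuous hu
  have hg : ∀ x, |rho x ^ κ * sstInv c f x| ≤ A * N * exp (-(κ / 2) * |x|) :=
    abs_rho_rpow_mul_sstInv_le hc2 hκ.le hb hu hfQ hmean
  calc _ ≤ A * N / √(κ / 2) + (β * (A * N) / √(κ / 2) + N) :=
        add_le_add (sqrt_integral_sq_le_of_abs_le_mul_exp (half_pos hκ) hg)
          (sqrt_integral_sq_rho_rpow_mul_deriv_sstInv_le hc2 hκ hf.continuous hu hfQ hg)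
    _ = ((1 + β) * A / √(κ / 2) + 1) * N := by ring
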